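/- Under the dual error setting with coercivity constant α_A, one has ∑_{n=0}^{N−1} (εⁿ)ᵀ M εⁿ ≤ (T/α_A)·∑_{n=0}^{N−1} ‖ϱⁿ‖₋₁², where T = N·Δt. -/

import Mathlib

open Matrix BigOperators Finset

/-- The energy norm `‖v‖_{G*} = √(vᵀ G* v)` induced by a matrix `G`. -/
noncomputable def normG {d : ℕ} (G : Matrix (Fin d) (Fin d) ℝ) (v : Fin d → ℝ) : ℝ :=
  Real.sqrt (v ⬝ᵥ G.mulVec v)

/-- The dual norm `‖r‖₋₁ = sup_{v ≠ 0} (rᵀ v)/‖v‖_{G*}`. -/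
noncomputable def dualNorm {d : ℕ} (G : Matrix (Fin d) (Fin d) ℝ) (r : Fin d → ℝ) : ℝ :=
  ⨆ v : {v : Fin d → ℝ // v ≠ 0}, (r ⬝ᵥ (v : Fin d → ℝ)) / normG G (v : Fin d → ℝ)

/-- The symmetric part `(A + Aᵀ)/2` of a matrix. -/
noncomputable def symPart {d : ℕ} (A : Matrix (Fin d) (Fin d) ℝ) : Matrix (Fin d) (Fin d) ℝ :=
  ((1 : ℝ)/2) • (A + Aᵀ)

/-! Put `eₖ = (εᵏ)ᵀ M εᵏ`, `sₖ = ‖εᵏ‖_{G*}` and `Dₖ = ‖ϱᵏ‖₋₁`. Testing the `k`-th step with `εᵏ`, the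
term `Δt (εᵏ)ᵀ Aᵀ εᵏ = Δt (εᵏ)ᵀ A_sym εᵏ` is at least `Δt α_A sₖ²` by coercivity, the cross term obeys
`2 (εᵏ)ᵀ M εᵏ⁺¹ ≤ eₖ + eₖ₊₁`, and `-(εᵏ)ᵀ ϱᵏ ≤ Dₖ sₖ`. Hence `eₖ ≤ eₖ₊₁ + 2 Δt (Dₖ sₖ - α_A sₖ²)`, and
Young's inequality turns this into `eₖ ≤ eₖ₊₁ + (Δt / α_A) Dₖ²`. As `e_N = 0`, telescoping bounds each
`eₙ` by `(Δt / α_A) ∑ₘ Dₘ²`, and summing over the `N` indices produces the factor `T = N Δt`. -/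

section MatrixForms

variable {d : ℕ}

section QuadraticForm

variable {G : Matrix (Fin d) (Fin d) ℝ}

lemma normG_neg (v : Fin d → ℝ) : normG G (-v) = normG G v := by
  simp [normG, mulVec_neg]

lemma normG_pos (hG : G.PosDef) {v : Fin d → ℝ} (hv : v ≠ 0) : 0 < normG G v :=
  Real.sqrt_pos.2 (by simpa using hG.dotProduct_mulVec_pos hv)

lemma dotProduct_mulVec_le_normG_mul_normG (hG : G.PosSemidef) (x y : Fin d → ℝ) :
    x ⬝ᵥ G *ᵥ y ≤ normG G x * normG G y := by
  let := G.toSeminormedAddCommGroup hG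
  let := G.toInnerProductSpace hG
  have h : (G *ᵥ y) ⬝ᵥ star x ≤ √((G *ᵥ x) ⬝ᵥ star x) * √((G *ᵥ y) ⬝ᵥ star y) :=
    real_inner_le_norm x y
  simpa [normG, dotProduct_comm] using h

lemma two_mul_dotProduct_mulVec_le (hG : G.PosSemidef) (x y : Fin d → ℝ) :
    2 * (x ⬝ᵥ G *ᵥ y) ≤ x ⬝ᵥ G *ᵥ x + y ⬝ᵥ G *ᵥ y := by
  have hsymm : y ⬝ᵥ G *ᵥ x = x ⬝ᵥ G *ᵥ y := by
    rw [dotProduct_mulVec, ← mulVec_transpose, ← conjTranspose_eq_transpose_of_trivial,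
      hG.isHermitian.eq, dotProduct_comm]
  have h := hG.dotProduct_mulVec_nonneg (x - y)
  simp only [star_trivial, mulVec_sub, dotProduct_sub, sub_dotProduct] at h
  linarith

lemma dotProduct_le_dualNorm_mul_normG (hG : G.PosDef) (r v : Fin d → ℝ) :
    r ⬝ᵥ v ≤ dualNorm G r * normG G v := by
  have hbound : ∀ w, r ⬝ᵥ w ≤ normG G (G⁻¹ *ᵥ r) * normG G w := fun w => by
    have hr : G *ᵥ (G⁻¹ *ᵥ r) = r := by
      rw [mulVec_mulVec, mul_nonsing_inv G (isUnit_iff_ne_zero.2 hG.det_pos.ne'), one_mulVec]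
    calc r ⬝ᵥ w = w ⬝ᵥ G *ᵥ (G⁻¹ *ᵥ r) := by rw [hr, dotProduct_comm]
      _ ≤ normG G (G⁻¹ *ᵥ r) * normG G w := by
        rw [mul_comm]; exact dotProduct_mulVec_le_normG_mul_normG hG.posSemidef _ _
  rcases eq_or_ne v 0 with rfl | hv
  · simp [normG]
  have hbdd : BddAbove (Set.range fun w : {w : Fin d → ℝ // w ≠ 0} =>
      r ⬝ᵥ (w : Fin d → ℝ) / normG G w) := by
    refine ⟨normG G (G⁻¹ *ᵥ r), ?_⟩
    rintro _ ⟨⟨w, hw⟩, rfl⟩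
    exact (div_le_iff₀ (normG_pos hG hw)).2 (hbound w)
  exact (div_le_iff₀ (normG_pos hG hv)).1 (le_ciSup hbdd ⟨v, hv⟩)

end QuadraticForm

lemma dotProduct_symPart_mulVec_self (A : Matrix (Fin d) (Fin d) ℝ) (v : Fin d → ℝ) :
    v ⬝ᵥ symPart A *ᵥ v = v ⬝ᵥ Aᵀ *ᵥ v := by
  have h : v ⬝ᵥ A *ᵥ v = v ⬝ᵥ Aᵀ *ᵥ v := by
    rw [dotProduct_mulVec, ← mulVec_transpose, dotProduct_comm]
  simp only [symPart, smul_mulVec, add_mulVec, dotProduct_smul, dotProduct_add, h, smul_eq_mul]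
  ring

lemma dotProduct_mulVec_self_le_of_dual_step {G M A : Matrix (Fin d) (Fin d) ℝ}
    (hG : G.PosDef) (hM : M.PosSemidef) {Δt αA : ℝ} (hΔt : 0 ≤ Δt) (hαA : 0 < αA)
    (hcoA : ∀ v, αA * normG G v ^ 2 ≤ v ⬝ᵥ symPart A *ᵥ v)
    {e e' r : Fin d → ℝ} (hstep : (M + Δt • Aᵀ) *ᵥ e = M *ᵥ e' - Δt • r) :
    e ⬝ᵥ M *ᵥ e ≤ e' ⬝ᵥ M *ᵥ e' + Δt / αA * dualNorm G r ^ 2 := by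
  set s := normG G e
  set D := dualNorm G r
  have htest : e ⬝ᵥ M *ᵥ e + Δt * (e ⬝ᵥ Aᵀ *ᵥ e) = e ⬝ᵥ M *ᵥ e' - Δt * (e ⬝ᵥ r) := by
    simpa only [add_mulVec, smul_mulVec, dotProduct_add, dotProduct_sub, dotProduct_smul,
      smul_eq_mul] using congrArg (e ⬝ᵥ ·) hstep
  have hcross := two_mul_dotProduct_mulVec_le hM e e'
  have hcoer : αA * s ^ 2 ≤ e ⬝ᵥ Aᵀ *ᵥ e := dotProduct_symPart_mulVec_self A e ▸ hcoA e
  have hload : -(e ⬝ᵥ r) ≤ D * s := by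
    simpa [dotProduct_comm, normG_neg] using dotProduct_le_dualNorm_mul_normG hG r (-e)
  have hyoung : 2 * (D * s - αA * s ^ 2) ≤ D ^ 2 / αA := by
    rw [le_div_iff₀ hαA]
    nlinarith [sq_nonneg (D - αA * s)]
  have henergy : e ⬝ᵥ M *ᵥ e ≤ e' ⬝ᵥ M *ᵥ e' + Δt * (2 * (D * s - αA * s ^ 2)) := by
    nlinarith [mul_le_mul_of_nonneg_left hcoer hΔt, mul_le_mul_of_nonneg_left hload hΔt]
  calc e ⬝ᵥ M *ᵥ e ≤ e' ⬝ᵥ M *ᵥ e' + Δt * (D ^ 2 / αA) := henergy.trans (by gcongr)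
    _ = e' ⬝ᵥ M *ᵥ e' + Δt / αA * D ^ 2 := by ring

end MatrixForms

section Telescoping

variable {α : Type*} [AddCommGroup α] [PartialOrder α] [IsOrderedAddMonoid α]
  {e c : ℕ → α} {N : ℕ}

lemma le_sum_Ico_of_le_succ_add (hN : e N = 0) (h : ∀ k < N, e k ≤ e (k + 1) + c k)
    {n : ℕ} (hn : n ≤ N) : e n ≤ ∑ m ∈ Ico n N, c m := by
  have htel := sum_Ico_sub (fun m => -e m) hn
  simp only [neg_sub_neg, hN, sub_zero] at htel
  rw [← htel]
  exact sum_le_sum fun m hm => sub_le_iff_le_add'.2 (h m (mem_Ico.1 hm).2)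

lemma sum_range_le_nsmul_sum_range (hN : e N = 0) (hc : ∀ k < N, 0 ≤ c k)
    (h : ∀ k < N, e k ≤ e (k + 1) + c k) :
    ∑ n ∈ range N, e n ≤ N • ∑ m ∈ range N, c m := by
  calc ∑ n ∈ range N, e n ≤ ∑ _n ∈ range N, ∑ m ∈ range N, c m :=
        sum_le_sum fun n hn => (le_sum_Ico_of_le_succ_add hN h (mem_range.1 hn).le).trans <|
          sum_le_sum_of_subset_of_nonneg (range_eq_Ico N ▸ Ico_subset_Ico_left n.zero_le)
            fun k hk _ => hc k (mem_range.1 hk)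
    _ = N • ∑ m ∈ range N, c m := by rw [sum_const, card_range]

end Telescoping

theorem stmt10_general {d : ℕ}
    (G M A : Matrix (Fin d) (Fin d) ℝ) (hG : G.PosDef) (hM : M.PosSemidef)
    (Δt : ℝ) (hΔt : 0 < Δt) (N : ℕ)
    (αA : ℝ) (hαA : 0 < αA)
    (hcoA : ∀ v : Fin d → ℝ, αA * (normG G v)^2 ≤ v ⬝ᵥ (symPart A).mulVec v)
    (ε ϱ : ℕ → Fin d → ℝ) (hεN : ε N = 0)
    (hstep : ∀ k, k < N →
      (M + Δt • Aᵀ).mulVec (ε k) = M.mulVec (ε (k + 1)) - Δt • ϱ k) :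
    ∑ n ∈ Finset.range N, ε n ⬝ᵥ M.mulVec (ε n) ≤
      ((N * Δt) / αA) * ∑ n ∈ Finset.range N, (dualNorm G (ϱ n))^2 := by
  have hsum := sum_range_le_nsmul_sum_range (e := fun n => ε n ⬝ᵥ M *ᵥ ε n)
    (c := fun n => Δt / αA * dualNorm G (ϱ n) ^ 2) (by simp [hεN]) (fun k _ => by positivity)
    fun k hk => dotProduct_mulVec_self_le_of_dual_step hG hM hΔt.le hαA hcoA (hstep k hk)
  calc _ ≤ N • ∑ m ∈ range N, Δt / αA * dualNorm G (ϱ m) ^ 2 := hsum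
    _ = _ := by rw [nsmul_eq_mul, ← mul_sum]; ring

theorem stmt10 {d : ℕ} (hd : 1 ≤ d)
    (G M A : Matrix (Fin d) (Fin d) ℝ) (hG : G.PosDef) (hM : M.PosSemidef)
    (Δt : ℝ) (hΔt : 0 < Δt) (N : ℕ) (hN : 1 ≤ N)
    (αA : ℝ) (hαA : 0 < αA)
    (hcoA : ∀ v : Fin d → ℝ, αA * (normG G v)^2 ≤ v ⬝ᵥ (symPart A).mulVec v)
    (ε ϱ : ℕ → Fin d → ℝ) (hεN : ε N = 0)
    (hstep : ∀ k, k < N →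
      (M + Δt • Aᵀ).mulVec (ε k) = M.mulVec (ε (k + 1)) - Δt • ϱ k) :
    ∑ n ∈ Finset.range N, ε n ⬝ᵥ M.mulVec (ε n) ≤
      ((N * Δt) / αA) * ∑ n ∈ Finset.range N, (dualNorm G (ϱ n))^2 :=
  stmt10_general G M A hG hM Δt hΔt N αA hαA hcoA ε ϱ hεN hstep
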